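/- Let G=(V,E) be a finite connected simple graph and (X_t)_{t≥0} the 3-color CCA trajectory of an initial 3-coloring X_0 : V → ℤ/3ℤ. Then X_t synchronizes if and only if dX_0 is irrotational, i.e., the contour integral of dX_0 over every closed directed cycle of G is zero. -/

import Mathlib

/-!
Along an edge the 1-form evolves by `dX_{t+1}(u,v) = dX_t(u,v) + e_t(v) - e_t(u)`, where `e_t`
indicates the excited vertices: `dX_t(u,v) = 1` forces `u` to fire and `dX_t(u,v) = -1` forces `v`
to fire, so the right-hand side stays in `{-1,0,1}`. Hence `dX_t = dX_0 + d n_t`, with `n_t` the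
excitation counts, and contour integrals are conserved. A synchronized coloring has `dX = 0`, so
`dX_0` is irrotational. Conversely, if `dX_0 = dh` then `h + n_t` is a potential for `dX_t`; an
excited vertex has a neighbour whose potential is one larger, so `h + n_t ≤ max h`. Each vertex is
thus excited only finitely often, and once excitations stop, adjacent colors agree.
-/

noncomputable section
attribute [local instance] Classical.propDecidable

open Filter

variable {V : Type*}

/-- Unique representative in `{-1,0,1}` of an element of `ℤ/3ℤ`. -/
def ZMod.repInt (a : ZMod 3) : ℤ := if a = 0 then 0 else if a = 1 then 1 else -1

/-- One step of the 3-color cyclic cellular automaton. -/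
def ccaStep (G : SimpleGraph V) (X : V → ZMod 3) : V → ZMod 3 :=
  fun v => if ∃ u, G.Adj v u ∧ X u = X v + 1 then X v + 1 else X v

/-- The CCA trajectory started from `X₀`. -/
def ccaTraj (G : SimpleGraph V) (X₀ : V → ZMod 3) : ℕ → V → ZMod 3 :=
  fun t => (ccaStep G)^[t] X₀

/-- A vertex is excited at time `t` for CCA iff its color advances. -/
def ccaExcited (G : SimpleGraph V) (X₀ : V → ZMod 3) (t : ℕ) (v : V) : Prop :=
  ccaTraj G X₀ (t + 1) v = ccaTraj G X₀ t v + 1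

/-- Number of excitations of `x` at times `0, …, t-1` (CCA). -/
def ccaNe (G : SimpleGraph V) (X₀ : V → ZMod 3) (t : ℕ) (x : V) : ℕ :=
  ((Finset.range t).filter fun s => ccaExcited G X₀ s x).card

/-- The CCA 1-form `dX` on ordered pairs of vertices. -/
def dXcca (X : V → ZMod 3) (u v : V) : ℤ := (X v - X u).repInt

/-- Path integral of the CCA 1-form along a walk. -/
def walkIntCCA {G : SimpleGraph V} (X : V → ZMod 3) {x y : V} (w : G.Walk x y) : ℤ :=
  (w.darts.map fun d => dXcca X d.toProd.1 d.toProd.2).sum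

namespace ZMod

theorem intCast_repInt (a : ZMod 3) : ((a.repInt : ℤ) : ZMod 3) = a := by
  unfold repInt
  split_ifs <;> subst_vars <;> simp
  revert a; decide

theorem repInt_mem_Icc (a : ZMod 3) : a.repInt ∈ Set.Icc (-1) 1 := by
  unfold repInt
  split_ifs <;> simp

theorem repInt_intCast {z : ℤ} (hz : z ∈ Set.Icc (-1) 1) : (z : ZMod 3).repInt = z := by
  obtain ⟨h₁, h₂⟩ := hz
  interval_cases z <;> simp +decide

theorem repInt_eq_of_intCast_eq {a : ZMod 3} {z : ℤ} (hz : z ∈ Set.Icc (-1) 1)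
    (h : (z : ZMod 3) = a) : a.repInt = z :=
  h ▸ repInt_intCast hz

theorem repInt_neg (a : ZMod 3) : (-a).repInt = -a.repInt := by
  obtain ⟨h₁, h₂⟩ := repInt_mem_Icc a
  conv_lhs => rw [← intCast_repInt a, ← Int.cast_neg]
  exact repInt_intCast ⟨by omega, by omega⟩

theorem eq_intCast_of_repInt_eq {a : ZMod 3} {z : ℤ} (h : a.repInt = z) : a = z :=
  h ▸ (intCast_repInt a).symm

theorem eq_of_ne_add_one {a b : ZMod 3} (hab : a ≠ b + 1) (hba : b ≠ a + 1) : a = b := by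
  revert a b; decide

end ZMod

theorem Nat.finite_setOf_of_count_le {p : ℕ → Prop} [DecidablePred p] {B : ℕ}
    (h : ∀ n, Nat.count p n ≤ B) : {n | p n}.Finite :=
  Set.Finite.of_finite_image ((Set.finite_Iic B).subset (by rintro _ ⟨n, -, rfl⟩; exact h n))
    fun _ hm _ hn => Nat.count_injective hm hn

section WalkIntegral

open SimpleGraph

variable {G : SimpleGraph V} (X : V → ZMod 3)

theorem dXcca_swap (u v : V) : dXcca X v u = -dXcca X u v := by
  rw [dXcca, dXcca, ← ZMod.repInt_neg, neg_sub]

@[simp]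
theorem walkIntCCA_nil {x : V} : walkIntCCA X (Walk.nil : G.Walk x x) = 0 := rfl

@[simp]
theorem walkIntCCA_cons {x y z : V} (h : G.Adj x y) (p : G.Walk y z) :
    walkIntCCA X (Walk.cons h p) = dXcca X x y + walkIntCCA X p := by
  simp [walkIntCCA]

theorem walkIntCCA_append {x y z : V} (p : G.Walk x y) (q : G.Walk y z) :
    walkIntCCA X (p.append q) = walkIntCCA X p + walkIntCCA X q := by
  simp [walkIntCCA]

theorem walkIntCCA_reverse {x y : V} (p : G.Walk x y) :
    walkIntCCA X p.reverse = -walkIntCCA X p := by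
  induction p with
  | nil => simp
  | cons h p ih =>
    rw [Walk.reverse_cons, walkIntCCA_append, ih, walkIntCCA_cons, walkIntCCA_cons,
      walkIntCCA_nil, dXcca_swap]
    ring

theorem walkIntCCA_eq_zero_of_forall_eq {X : V → ZMod 3} (hX : ∀ a b, X a = X b) {x y : V}
    (w : G.Walk x y) : walkIntCCA X w = 0 := by
  induction w with
  | nil => rfl
  | @cons u v _ h p ih => simp [ih, dXcca, hX v u, ZMod.repInt]

variable {X} {u v : V}

theorem dXcca_mem_Icc : dXcca X u v ∈ Set.Icc (-1) 1 := ZMod.repInt_mem_Icc _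

theorem dXcca_eq_one_of_eq_add_one (h : X v = X u + 1) : dXcca X u v = 1 := by
  rw [dXcca, h, add_sub_cancel_left]
  exact ZMod.repInt_intCast (z := 1) (by simp)

theorem eq_add_one_of_dXcca_eq_one (h : dXcca X u v = 1) : X v = X u + 1 := by
  linear_combination ZMod.eq_intCast_of_repInt_eq h

theorem eq_add_one_of_dXcca_eq_neg_one (h : dXcca X u v = -1) : X u = X v + 1 := by
  linear_combination -ZMod.eq_intCast_of_repInt_eq h

end WalkIntegral

def IsIrrotational (G : SimpleGraph V) (X : V → ZMod 3) : Prop :=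
  ∀ (v : V) (c : G.Walk v v), c.IsCycle → walkIntCCA X c = 0

namespace IsIrrotational

open SimpleGraph

variable {G : SimpleGraph V} {X : V → ZMod 3}

theorem dXcca_add_walkIntCCA_eq_zero (hX : IsIrrotational G X) {u w : V} (h : G.Adj u w)
    {q : G.Walk w u} (hq : q.IsPath) : dXcca X u w + walkIntCCA X q = 0 := by
  by_cases he : s(u, w) ∈ q.edges
  · rw [hq.eq_adj_toWalk_of_mem_edges (Sym2.eq_swap ▸ he)]
    simp [dXcca_swap X u w]
  · simpa using hX u _ ((Walk.cons_isCycle_iff q h).mpr ⟨hq, he⟩)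

theorem walkIntCCA_bypass (hX : IsIrrotational G X) {x y : V} (w : G.Walk x y) :
    walkIntCCA X w.bypass = walkIntCCA X w := by
  induction w with
  | nil => rfl
  | @cons u v y h p ih =>
    rw [Walk.bypass]
    split_ifs with hu
    -- `bypass` cuts off the loop `u → v ⇝ u`, a path closed by one edge.
    · have hloop := hX.dXcca_add_walkIntCCA_eq_zero h ((Walk.bypass_isPath p).takeUntil hu)
      rw [walkIntCCA_cons, ← ih]
      conv_rhs => rw [← Walk.take_spec p.bypass hu, walkIntCCA_append]
      linarith
    · rw [walkIntCCA_cons, walkIntCCA_cons, ih]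

theorem walkIntCCA_eq_zero (hX : IsIrrotational G X) {v : V} (c : G.Walk v v) :
    walkIntCCA X c = 0 := by
  have hnil : c.bypass = Walk.nil :=
    Walk.eq_nil_iff_nil.mpr (Walk.isPath_iff_nil.mp (Walk.bypass_isPath c))
  rw [← hX.walkIntCCA_bypass, hnil, walkIntCCA_nil]

theorem exists_potential (hX : IsIrrotational G X) (hG : G.Preconnected) :
    ∃ h : V → ℤ, ∀ u v, G.Adj u v → dXcca X u v = h v - h u := by
  rcases isEmpty_or_nonempty V with hV | ⟨⟨r⟩⟩
  · exact ⟨0, fun u => isEmptyElim u⟩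
  refine ⟨fun v => walkIntCCA X (hG r v).some, fun u v huv => ?_⟩
  have hloop := hX.walkIntCCA_eq_zero
    (((hG r u).some.append (Walk.cons huv Walk.nil)).append (hG r v).some.reverse)
  simp only [walkIntCCA_append, walkIntCCA_reverse, walkIntCCA_cons, walkIntCCA_nil] at hloop
  linarith

end IsIrrotational

section Dynamics

variable (G : SimpleGraph V) (X₀ : V → ZMod 3)

theorem ccaTraj_succ (t : ℕ) : ccaTraj G X₀ (t + 1) = ccaStep G (ccaTraj G X₀ t) :=
  Function.iterate_succ_apply' _ _ _

theorem ccaExcited_iff {t : ℕ} {v : V} :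
    ccaExcited G X₀ t v ↔ ∃ u, G.Adj v u ∧ ccaTraj G X₀ t u = ccaTraj G X₀ t v + 1 := by
  rw [ccaExcited, ccaTraj_succ, ccaStep]
  split_ifs with h
  · exact iff_of_true rfl h
  · exact iff_of_false (by simp) h

theorem ccaTraj_succ_apply (t : ℕ) (v : V) :
    ccaTraj G X₀ (t + 1) v = ccaTraj G X₀ t v + if ccaExcited G X₀ t v then 1 else 0 := by
  rw [ccaExcited_iff, ccaTraj_succ, ccaStep]
  split_ifs <;> simp

theorem ccaNe_eq_count (t : ℕ) (v : V) : ccaNe G X₀ t v = Nat.count (ccaExcited G X₀ · v) t :=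
  (Nat.count_eq_card_filter_range _ t).symm

theorem ccaNe_succ (t : ℕ) (v : V) :
    ccaNe G X₀ (t + 1) v = ccaNe G X₀ t v + if ccaExcited G X₀ t v then 1 else 0 := by
  simp only [ccaNe_eq_count, Nat.count_succ]

variable {G}

theorem dXcca_ccaTraj_succ {u v : V} (huv : G.Adj u v) (t : ℕ) :
    dXcca (ccaTraj G X₀ (t + 1)) u v = dXcca (ccaTraj G X₀ t) u v
      + (if ccaExcited G X₀ t v then 1 else 0) - (if ccaExcited G X₀ t u then 1 else 0) := by
  obtain ⟨h₁, h₂⟩ : dXcca (ccaTraj G X₀ t) u v ∈ Set.Icc (-1) 1 := dXcca_mem_Icc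
  have hu : dXcca (ccaTraj G X₀ t) u v = 1 → ccaExcited G X₀ t u := fun h =>
    (ccaExcited_iff G X₀).mpr ⟨v, huv, eq_add_one_of_dXcca_eq_one h⟩
  have hv : dXcca (ccaTraj G X₀ t) u v = -1 → ccaExcited G X₀ t v := fun h =>
    (ccaExcited_iff G X₀).mpr ⟨u, huv.symm, eq_add_one_of_dXcca_eq_neg_one h⟩
  refine ZMod.repInt_eq_of_intCast_eq ?_ ?_
  · split_ifs <;> grind
  · rw [ccaTraj_succ_apply, ccaTraj_succ_apply, dXcca]
    split_ifs <;> push_cast [ZMod.intCast_repInt] <;> ring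

theorem dXcca_ccaTraj {u v : V} (huv : G.Adj u v) (t : ℕ) :
    dXcca (ccaTraj G X₀ t) u v = dXcca X₀ u v + ccaNe G X₀ t v - ccaNe G X₀ t u := by
  induction t with
  | zero => simp [ccaNe_eq_count, ccaTraj]
  | succ t ih =>
    rw [dXcca_ccaTraj_succ X₀ huv, ih, ccaNe_succ, ccaNe_succ]
    push_cast [Nat.cast_ite]
    ring

theorem walkIntCCA_ccaTraj (t : ℕ) {x y : V} (w : G.Walk x y) :
    walkIntCCA (ccaTraj G X₀ t) w = walkIntCCA X₀ w + ccaNe G X₀ t y - ccaNe G X₀ t x := by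
  induction w with
  | nil => simp
  | cons h p ih =>
    rw [walkIntCCA_cons, walkIntCCA_cons, ih, dXcca_ccaTraj X₀ h]
    ring

theorem potential_add_ccaNe_le {h : V → ℤ} (hh : ∀ u v, G.Adj u v → dXcca X₀ u v = h v - h u)
    {M : ℤ} (hM : ∀ v, h v ≤ M) (t : ℕ) (v : V) : h v + ccaNe G X₀ t v ≤ M := by
  induction t generalizing v with
  | zero => simpa [ccaNe_eq_count] using hM v
  | succ t ih =>
    rw [ccaNe_succ]
    split_ifs with hexc
    · obtain ⟨u, hvu, hu⟩ := (ccaExcited_iff G X₀).mp hexc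
      have hstep := dXcca_ccaTraj X₀ hvu t
      rw [dXcca_eq_one_of_eq_add_one hu, hh v u hvu] at hstep
      have := ih u
      push_cast
      linarith
    · simpa using ih v

theorem ccaTraj_eq_of_adj {t : ℕ} {u v : V} (huv : G.Adj u v) (hu : ¬ ccaExcited G X₀ t u)
    (hv : ¬ ccaExcited G X₀ t v) : ccaTraj G X₀ t u = ccaTraj G X₀ t v :=
  ZMod.eq_of_ne_add_one (fun h => hv ((ccaExcited_iff G X₀).mpr ⟨u, huv.symm, h⟩))
    (fun h => hu ((ccaExcited_iff G X₀).mpr ⟨v, huv, h⟩))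

theorem ccaTraj_eq_of_forall_not_ccaExcited (hG : G.Preconnected) {t : ℕ}
    (h : ∀ v, ¬ ccaExcited G X₀ t v) (x y : V) : ccaTraj G X₀ t x = ccaTraj G X₀ t y := by
  obtain ⟨w⟩ := hG x y
  induction w with
  | nil => rfl
  | cons huv _ ih => exact (ccaTraj_eq_of_adj X₀ huv (h _) (h _)).trans ih

end Dynamics

def CCASynchronizes (G : SimpleGraph V) (X₀ : V → ZMod 3) : Prop :=
  ∀ x y : V, ∃ N : ℕ, ∀ t ≥ N, ccaTraj G X₀ t x = ccaTraj G X₀ t y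

section Synchronization

variable {G : SimpleGraph V} {X₀ : V → ZMod 3}

theorem CCASynchronizes.isIrrotational [Finite V] (hsync : CCASynchronizes G X₀) :
    IsIrrotational G X₀ := by
  choose N hN using hsync
  obtain ⟨T, hT⟩ := Finite.exists_le fun p : V × V => N p.1 p.2
  intro v c _
  have hconst : ∀ a b, ccaTraj G X₀ T a = ccaTraj G X₀ T b := fun a b => hN a b T (hT (a, b))
  have hc := walkIntCCA_ccaTraj X₀ T c
  rw [walkIntCCA_eq_zero_of_forall_eq hconst] at hc
  linarith

theorem IsIrrotational.ccaSynchronizes [Finite V] (hX : IsIrrotational G X₀)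
    (hG : G.Preconnected) : CCASynchronizes G X₀ := by
  obtain ⟨h, hh⟩ := hX.exists_potential hG
  obtain ⟨M, hM⟩ := Finite.exists_le h
  have hfin : ∀ v, {s | ccaExcited G X₀ s v}.Finite := fun v =>
    Nat.finite_setOf_of_count_le (B := (M - h v).toNat) fun t => by
      have := potential_add_ccaNe_le X₀ hh hM t v
      rw [ccaNe_eq_count] at this
      omega
  obtain ⟨N, hN⟩ := (Set.finite_iUnion hfin).bddAbove
  refine fun x y => ⟨N + 1, fun t ht =>
    ccaTraj_eq_of_forall_not_ccaExcited X₀ hG (fun v hv => ?_) x y⟩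
  have := hN (Set.mem_iUnion.mpr ⟨v, hv⟩)
  omega

end Synchronization

/-- On a finite connected graph, the 3-color CCA trajectory synchronizes iff `dX₀`
is irrotational, i.e., has vanishing contour integral over every directed cycle. -/
theorem cca_synchronizes_iff_irrotational [Fintype V] (G : SimpleGraph V)
    (hconn : G.Connected) (X₀ : V → ZMod 3) :
    (∀ x y : V, ∃ N : ℕ, ∀ t ≥ N, ccaTraj G X₀ t x = ccaTraj G X₀ t y) ↔
    (∀ (v : V) (c : G.Walk v v), c.IsCycle → walkIntCCA X₀ c = 0) :=
  ⟨CCASynchronizes.isIrrotational, fun hX => IsIrrotational.ccaSynchronizes hX hconn.preconnected⟩
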